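/- arXiv:2305.07451 — 2 statements merged into one kernel-verified Lean document; each statement's English description precedes it below -/
import Mathlib

section
/- Let A be an automaton with timers such that every state has at most one active timer, i.e., |χ(q)| ≤ 1 for all states q. Then A is race-avoiding. -/
set_option maxHeartbeats 1000000

namespace AwT

/-- Actions of an automaton with timers: reading an input, or processing the timeout of a timer. -/
inductive Act (I X : Type) where
  | input : I → Act I X
  | timeout : X → Act I X

/-- Updates: `some (x, c)` starts timer `x` with positive integer value `c`; `none` is `⊥`. -/
abbrev Upd (X : Type) := Option (X × ℕ+)

/-- An automaton with timers (AT). `X` is the (finite) set of timers, `I` the (finite) set of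
inputs, `Q` the (finite) set of states. -/
structure AT (X I Q : Type) [DecidableEq X] where
  q0 : Q
  χ : Q → Finset X
  δ : Q → Act I X → Option (Q × Upd X)
  init_active : χ q0 = ∅
  defined_iff : ∀ q a, (δ q a).isSome ↔
      (∃ i, a = Act.input i) ∨ (∃ x ∈ χ q, a = Act.timeout x)
  timeout_self : ∀ q x q' y c, δ q (Act.timeout x) = some (q', some (y, c)) → y = x
  noupdate_sub : ∀ q a q', δ q a = some (q', none) → χ q' ⊆ χ q
  noupdate_timeout : ∀ q x q', δ q (Act.timeout x) = some (q', none) → x ∉ χ q'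
  update_mem : ∀ q a q' x c, δ q a = some (q', some (x, c)) → x ∈ χ q'
  update_sub : ∀ q a q' x c, δ q a = some (q', some (x, c)) → χ q' \ {x} ⊆ χ q

variable {X I Q : Type} [DecidableEq X]

/-- A timed run `(q₀,κ₀) d₁ i₁/u₁ … dₙ iₙ/uₙ d_{n+1} (q,κ)` of an AT, with `n` discrete
transitions.  `states k` and `vals k` give the configuration before the `k`-th delay,
`delays k` is the `k`-th delay, and `acts k`/`upds k` are the `k`-th action and update. -/
structure TimedRun (A : AT X I Q) (n : ℕ) where
  states : Fin (n+1) → Q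
  vals : Fin (n+1) → X → ℝ
  delays : Fin (n+1) → ℝ
  acts : Fin n → Act I X
  upds : Fin n → Upd X
  init_state : states 0 = A.q0
  init_val : ∀ x, vals 0 x = 0
  delays_nonneg : ∀ k, 0 ≤ delays k
  delays_le : ∀ k, ∀ x ∈ A.χ (states k), delays k ≤ vals k x
  trans : ∀ k : Fin n, A.δ (states k.castSucc) (acts k) = some (states k.succ, upds k)
  timeout_zero : ∀ (k : Fin n) (x : X), acts k = Act.timeout x →
      vals k.castSucc x - delays k.castSucc = 0
  val_step : ∀ (k : Fin n) (y : X),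
      vals k.succ y = (upds k).elim (vals k.castSucc y - delays k.castSucc)
        (fun p => if y = p.1 then ((p.2 : ℕ) : ℝ) else vals k.castSucc y - delays k.castSucc)

variable {A : AT X I Q} {n : ℕ}

/-- A timed run is padded if its first and last delays are positive and no active timer has
value 0 in its last configuration. -/
def Padded (ρ : TimedRun A n) : Prop :=
  0 < ρ.delays 0 ∧ 0 < ρ.delays (Fin.last n) ∧
    ∀ x ∈ A.χ (ρ.states (Fin.last n)),
      ρ.vals (Fin.last n) x - ρ.delays (Fin.last n) ≠ 0

/-- Timer fates of blocks: `⊥`, `●` (discarded at value zero), `×`. -/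
inductive Fate where
  | bot | disc0 | cross
  deriving DecidableEq

/-- The transition at index `ℓ` discards the timer `x`: `x` is active before the transition,
the action is not `to[x]`, and the transition stops or restarts `x`. -/
def Discards (ρ : TimedRun A n) (ℓ : Fin n) (x : X) : Prop :=
  x ∈ A.χ (ρ.states ℓ.castSucc) ∧ ρ.acts ℓ ≠ Act.timeout x ∧
    (x ∉ A.χ (ρ.states ℓ.succ) ∨ ∃ c, ρ.upds ℓ = some (x, c))

/-- Action `k` triggers action `k'`. -/
def Triggers (ρ : TimedRun A n) (k k' : Fin n) : Prop :=
  k < k' ∧ ∃ x c, ρ.upds k = some (x, c) ∧ ρ.acts k' = Act.timeout x ∧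
    ∀ ℓ, k < ℓ → ℓ < k' → ρ.acts ℓ ≠ Act.timeout x ∧ ¬ Discards ρ ℓ x

/-- After action `k` (which restarts `x`), the first transition discarding `x` does so while the
value of `x` is zero. -/
def DiscardedAtZeroAfter (ρ : TimedRun A n) (k : Fin n) (x : X) : Prop :=
  ∃ ℓ, k < ℓ ∧ Discards ρ ℓ x ∧ (∀ m, k < m → m < ℓ → ¬ Discards ρ m x) ∧
    ρ.vals ℓ.castSucc x - ρ.delays ℓ.castSucc = 0

/-- `γ` is the timer fate of a block whose index sequence is `ks`. -/
def FateOf (ρ : TimedRun A n) (ks : List (Fin n)) (γ : Fate) : Prop :=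
  ∀ k, ks.getLast? = some k →
    ((ρ.upds k = none → γ = Fate.bot) ∧
     ∀ x c, ρ.upds k = some (x, c) →
        ((DiscardedAtZeroAfter ρ k x → γ = Fate.disc0) ∧
         (¬ DiscardedAtZeroAfter ρ k x → γ = Fate.cross)))

/-- `(ks, γ)` is a block of `ρ`: `ks` is a maximal chain of actions each triggering the next,
starting with an input-action, and `γ` is its timer fate. -/
def IsBlock (ρ : TimedRun A n) (ks : List (Fin n)) (γ : Fate) : Prop :=
  ks ≠ [] ∧ List.Chain' (Triggers ρ) ks ∧
    (∀ k, ks.head? = some k → ∃ i, ρ.acts k = Act.input i) ∧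
    (∀ k k', ks.getLast? = some k → ¬ Triggers ρ k k') ∧
    FateOf ρ ks γ

/-- The sum of the delays strictly between action `k` and action `k'` (for `k ≤ k'`). -/
def delayBetween (ρ : TimedRun A n) (k k' : Fin n) : ℝ :=
  ∑ ℓ ∈ Finset.Ioc k k', ρ.delays ℓ.castSucc

/-- `B ≺ B'`: blocks `B` and `B'` participate in a race, witnessed either by an action of `B`
occurring before an action of `B'` with total delay zero in between, or by an action of `B`
being the first to discard the timer (re)started by the last action of `B'` while it has
value zero. -/
def Prec (ρ : TimedRun A n) (B B' : List (Fin n) × Fate) : Prop :=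
  (∃ k ∈ B.1, ∃ k' ∈ B'.1, k < k' ∧ delayBetween ρ k k' = 0) ∨
  (B'.2 = Fate.disc0 ∧ ∃ k' x c, B'.1.getLast? = some k' ∧ ρ.upds k' = some (x, c) ∧
     ∃ ℓ ∈ B.1, k' < ℓ ∧ Discards ρ ℓ x ∧ ∀ m, k' < m → m < ℓ → ¬ Discards ρ m x)

/-- Two blocks participate in a (common) race. -/
def BlocksRace (ρ : TimedRun A n) (B B' : List (Fin n) × Fate) : Prop :=
  Prec ρ B B' ∨ Prec ρ B' B

/-- The run contains a race. -/
def HasRace (ρ : TimedRun A n) : Prop :=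
  ∃ B B' : List (Fin n) × Fate, IsBlock ρ B.1 B.2 ∧ IsBlock ρ B'.1 B'.2 ∧ B ≠ B' ∧
    BlocksRace ρ B B'

/-- The block graph of `ρ` (vertices: blocks, edges: `≺`) has a cycle. -/
def HasCycle (ρ : TimedRun A n) : Prop :=
  ∃ (m : ℕ) (f : Fin (m+1) → List (Fin n) × Fate),
    0 < m ∧ (∀ j, IsBlock ρ (f j).1 (f j).2) ∧ f (Fin.last m) = f 0 ∧
      ∀ j : Fin m, Prec ρ (f j.castSucc) (f j.succ)

open Classical in
/-- The delays of `ρ` after shifting the block whose set of action indices is `S` by `ε`: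
the delay preceding an action of the block whose predecessor is not in the block gains `ε`,
and the delay following an action of the block whose successor is not in the block loses `ε`. -/
noncomputable def wiggledDelay (ρ : TimedRun A n) (S : Set (Fin n)) (ε : ℝ)
    (j : Fin (n+1)) : ℝ :=
  ρ.delays j
    + (if (∃ k : Fin n, k.castSucc = j ∧ k ∈ S ∧ ∀ k' : Fin n, k'.succ = j → k' ∉ S)
        then ε else 0)
    - (if (∃ k : Fin n, k.succ = j ∧ k ∈ S ∧ ∀ k' : Fin n, k'.castSucc = j → k' ∉ S)
        then ε else 0)

/-- `ρ'` is obtained from `ρ` by shifting the actions with indices in `S` by `ε`. -/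
def WiggleSpec (ρ ρ' : TimedRun A n) (S : Set (Fin n)) (ε : ℝ) : Prop :=
  ρ'.states = ρ.states ∧ ρ'.acts = ρ.acts ∧ ρ'.upds = ρ.upds ∧
    ∀ j, ρ'.delays j = wiggledDelay ρ S ε j

/-- The untimed trace of a run: the alternating sequence of states and actions. -/
def untime (ρ : TimedRun A n) : List (Q × Act I X) × Q :=
  (List.ofFn (fun k : Fin n => (ρ.states k.castSucc, ρ.acts k)), ρ.states (Fin.last n))

/-- The block with index sequence `ks` can be wiggled: for some `ε ≠ 0`, shifting it by `ε`
yields a padded timed run (with the same untimed trace) in which it participates in no race. -/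
def CanWiggleBlock (ρ : TimedRun A n) (ks : List (Fin n)) : Prop :=
  ∃ ε : ℝ, ε ≠ 0 ∧ ∃ ρ' : TimedRun A n, WiggleSpec ρ ρ' {k | k ∈ ks} ε ∧ Padded ρ' ∧
    ∀ (γ₁ : Fate) (ks₂ : List (Fin n)) (γ₂ : Fate),
      IsBlock ρ' ks γ₁ → IsBlock ρ' ks₂ γ₂ → (ks, γ₁) ≠ (ks₂, γ₂) →
        ¬ BlocksRace ρ' (ks, γ₁) (ks₂, γ₂)

/-- One wiggling step: wiggle a single block of `ρ`. -/
def WiggleStep (ρ ρ' : TimedRun A n) : Prop :=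
  ∃ (ks : List (Fin n)) (γ : Fate) (ε : ℝ), ε ≠ 0 ∧ IsBlock ρ ks γ ∧
    WiggleSpec ρ ρ' {k | k ∈ ks} ε ∧ Padded ρ' ∧
    ∀ (γ₁ : Fate) (ks₂ : List (Fin n)) (γ₂ : Fate),
      IsBlock ρ' ks γ₁ → IsBlock ρ' ks₂ γ₂ → (ks, γ₁) ≠ (ks₂, γ₂) →
        ¬ BlocksRace ρ' (ks, γ₁) (ks₂, γ₂)

/-- `ρ` can be wiggled: wiggling its blocks one at a time yields a race-free padded run with
the same untimed trace. -/
def Wigglable (ρ : TimedRun A n) : Prop :=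
  ∃ ρ' : TimedRun A n, Relation.ReflTransGen WiggleStep ρ ρ' ∧ Padded ρ' ∧
    ¬ HasRace ρ' ∧ untime ρ' = untime ρ

/-- `A` is race-avoiding. -/
def RaceAvoiding (A : AT X I Q) : Prop :=
  ∀ (n : ℕ) (ρ : TimedRun A n), Padded ρ → HasRace ρ →
    ∃ (n' : ℕ) (ρ' : TimedRun A n'), Padded ρ' ∧ ¬ HasRace ρ' ∧ untime ρ' = untime ρ

/-- All delays of the run are strictly positive. -/
def AllPos (ρ : TimedRun A n) : Prop := ∀ j, 0 < ρ.delays j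

/-- `ks` is (the index sequence of) an `x`-block: its actions (re)start the timer `x`. -/
def IsXBlock (ρ : TimedRun A n) (ks : List (Fin n)) (x : X) : Prop :=
  ∃ k ∈ ks, ∃ c, ρ.upds k = some (x, c)

/-- Modified semantics from a total order on timers: in every race, any action of an `x`-block
is processed before any action of a `y`-block whenever `x < y`. -/
def OrderedSem [LT X] (ρ : TimedRun A n) : Prop :=
  ∀ (ks : List (Fin n)) (γ : Fate) (ks' : List (Fin n)) (γ' : Fate) (x y : X),
    IsBlock ρ ks γ → IsBlock ρ ks' γ' → IsXBlock ρ ks x → IsXBlock ρ ks' y → x < y →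
      ∀ k ∈ ks, ∀ k' ∈ ks',
        ((k < k' ∧ delayBetween ρ k k' = 0) ∨ (k' < k ∧ delayBetween ρ k' k = 0)) → k < k'

/-! ### Configurations, timer-equivalence and the region automaton -/

/-- Valuations `κ, κ'` (on the active timers of `q`) are timer-equivalent. -/
def ValEquiv (A : AT X I Q) (q : Q) (κ κ' : X → ℝ) : Prop :=
  ∀ x ∈ A.χ q, (⌊κ x⌋ = ⌊κ' x⌋) ∧ (Int.fract (κ x) = 0 ↔ Int.fract (κ' x) = 0) ∧
    ∀ y ∈ A.χ q, (Int.fract (κ x) ≤ Int.fract (κ y) ↔ Int.fract (κ' x) ≤ Int.fract (κ' y))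

/-- Timer-equivalence of configurations. -/
def ConfigEquiv (A : AT X I Q) (c c' : Q × (X → ℝ)) : Prop :=
  c.1 = c'.1 ∧ ValEquiv A c.1 c.2 c'.2

/-- A discrete transition between configurations, on action `a` with update `u`. -/
def DiscreteStep (A : AT X I Q) (c : Q × (X → ℝ)) (a : Act I X) (u : Upd X)
    (c' : Q × (X → ℝ)) : Prop :=
  A.δ c.1 a = some (c'.1, u) ∧ (∀ x, a = Act.timeout x → c.2 x = 0) ∧
    ∀ y ∈ A.χ c'.1,
      c'.2 y = u.elim (c.2 y) (fun p => if y = p.1 then ((p.2 : ℕ) : ℝ) else c.2 y)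

/-- A delay transition between configurations, of duration `d ≥ 0`. -/
def DelayStep (A : AT X I Q) (c : Q × (X → ℝ)) (d : ℝ) (c' : Q × (X → ℝ)) : Prop :=
  0 ≤ d ∧ c'.1 = c.1 ∧ (∀ x ∈ A.χ c.1, d ≤ c.2 x) ∧ ∀ x ∈ A.χ c.1, c'.2 x = c.2 x - d

/-- One step of a timed run between configurations: a delay or a discrete transition. -/
def Step (A : AT X I Q) (c c' : Q × (X → ℝ)) : Prop :=
  (∃ d, DelayStep A c d c') ∨ (∃ a u, DiscreteStep A c a u c')

/-- One transition of the region automaton between the classes of `c` and `c'`: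
some representatives are related by a positive delay (`τ`) or a discrete transition. -/
def RegStep (A : AT X I Q) (c c' : Q × (X → ℝ)) : Prop :=
  ∃ c₁ c₂, ConfigEquiv A c c₁ ∧ ConfigEquiv A c' c₂ ∧
    ((∃ d, 0 < d ∧ DelayStep A c₁ d c₂) ∨ ∃ a u, DiscreteStep A c₁ a u c₂)

/-! ### The extended run and relative elapsed time -/

open Classical in
/-- The timers discarded by the transition at index `k`. -/
noncomputable def discardedSet (ρ : TimedRun A n) (k : Fin n) : Finset X :=
  (A.χ (ρ.states k.castSucc)).filter (fun x => Discards ρ k x)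

/-- Positions of actions in the extended run of `ρ`: `(k, 0)` is the `k`-th action of `ρ`,
and `(k, j)` for `1 ≤ j` is the `j`-th zero-delay pseudo-action (`●` or `×`) inserted after
it, one for each timer it discards. -/
def EPos (ρ : TimedRun A n) : Type := {p : Fin n × ℕ // p.2 ≤ (discardedSet ρ p.1).card}

open Classical in
/-- Relative elapsed time between two positions of the extended run: the sum `d` of the delays
between them if the first occurs (weakly) before the second, and `-d` otherwise. -/
noncomputable def reltime (ρ : TimedRun A n) (p p' : EPos ρ) : ℝ :=
  if p.1.1 < p'.1.1 ∨ (p.1.1 = p'.1.1 ∧ p.1.2 ≤ p'.1.2) then delayBetween ρ p.1.1 p'.1.1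
  else - delayBetween ρ p'.1.1 p.1.1

end AwT

/-! ### Linear-bounded Turing machines -/

/-- A (nondeterministic) linear-bounded Turing machine with alphabet `σ` and states `Q`.
A transition `(q, α, α', D, q')` reads `α`, writes `α'` and moves left (`D = false`) or
right (`D = true`). -/
structure LBTM (σ Q : Type) where
  q0 : Q
  qF : Q
  T : Finset (Q × σ × σ × Bool × Q)

/-- One step of an LBTM on a tape of length `n`; configurations are (state, tape, head). -/
def LBTMStep {σ Q : Type} (M : LBTM σ Q) {n : ℕ}
    (c c' : Q × (Fin n → σ) × Fin n) : Prop :=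
  ∃ α' : σ, ∃ D : Bool, (c.1, c.2.1 c.2.2, α', D, c'.1) ∈ M.T ∧
    c'.2.1 = Function.update c.2.1 c.2.2 α' ∧
    ((D = true ∧ (c'.2.2 : ℕ) = (c.2.2 : ℕ) + 1) ∨
     (D = false ∧ (c.2.2 : ℕ) = (c'.2.2 : ℕ) + 1))

/-- `M` accepts the word `w`. -/
def LBTMAccepts {σ Q : Type} (M : LBTM σ Q) {n : ℕ} (hn : 0 < n) (w : Fin n → σ) : Prop :=
  ∃ c : Q × (Fin n → σ) × Fin n,
    Relation.ReflTransGen (LBTMStep M) (M.q0, w, ⟨0, hn⟩) c ∧ c.1 = M.qF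

/-!
With at most one active timer, the timing of a run can be chosen freely along its untimed
trace: before a timeout of the active timer wait out its whole value, before any other action
(and at the end of the run) wait half of it, and wait one time unit when no timer is active.
All delays of the retimed run are then positive, so no two actions happen with zero delay
between them, and a timer only reaches zero when the next action is its own timeout, so no
timer is discarded at value zero. Hence the retimed run is padded and has no race.
-/

namespace AwT

variable {X I Q : Type} [DecidableEq X]

namespace AT

variable (A : AT X I Q)

theorem mem_χ_of_δ_timeout {q : Q} {x : X} {r : Q × Upd X}
    (h : A.δ q (Act.timeout x) = some r) : x ∈ A.χ q := by
  rcases (A.defined_iff q (Act.timeout x)).mp (by simp [h]) with ⟨i, hi⟩ | ⟨y, hy, hxy⟩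
  · cases hi
  · cases hxy
    exact hy

theorem restarted_or_mem_χ_of_δ {q q' : Q} {a : Act I X} {u : Upd X} {x : X}
    (h : A.δ q a = some (q', u)) (hx : x ∈ A.χ q') :
    (∃ c, u = some (x, c)) ∨ (x ∈ A.χ q ∧ a ≠ Act.timeout x ∧ ∀ c, u ≠ some (x, c)) := by
  rcases u with _ | ⟨z, c⟩
  · exact Or.inr ⟨A.noupdate_sub _ _ _ h hx,
      fun ha => A.noupdate_timeout _ _ _ (ha ▸ h) hx, fun _ => nofun⟩
  · by_cases hxz : x = z
    · exact Or.inl ⟨c, by rw [hxz]⟩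
    · refine Or.inr ⟨A.update_sub _ _ _ _ _ h (by simp [hx, hxz]), fun ha => hxz ?_,
        by simp [Ne.symm hxz]⟩
      exact (A.timeout_self _ _ _ _ _ (ha ▸ h)).symm

noncomputable def idleDelay (q : Q) (v : X → ℝ) : ℝ :=
  if h : (A.χ q).Nonempty then (A.χ q).inf' h v / 2 else 1

/-- `a` is the action that follows the delay, `none` at the end of the run. -/
noncomputable def freshDelay (q : Q) (v : X → ℝ) : Option (Act I X) → ℝ
  | some (Act.timeout x) => v x
  | some (Act.input _) => A.idleDelay q v
  | none => A.idleDelay q v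

variable {A} {q : Q} {v : X → ℝ}

theorem idleDelay_pos (hv : ∀ x ∈ A.χ q, 0 < v x) : 0 < A.idleDelay q v := by
  unfold idleDelay
  split_ifs with h
  · exact half_pos ((Finset.lt_inf'_iff h).mpr hv)
  · exact one_pos

theorem idleDelay_lt (hv : ∀ x ∈ A.χ q, 0 < v x) {x : X} (hx : x ∈ A.χ q) :
    A.idleDelay q v < v x := by
  have h : (A.χ q).Nonempty := ⟨x, hx⟩
  have := Finset.inf'_le v hx
  have := (Finset.lt_inf'_iff h).mpr hv
  rw [idleDelay, dif_pos h]
  linarith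

variable {a : Option (Act I X)}

theorem freshDelay_pos (hv : ∀ x ∈ A.χ q, 0 < v x)
    (ha : ∀ y, a = some (Act.timeout y) → y ∈ A.χ q) : 0 < A.freshDelay q v a := by
  rcases a with _ | _ | y
  · exact idleDelay_pos hv
  · exact idleDelay_pos hv
  · exact hv y (ha y rfl)

theorem freshDelay_lt (hq : (A.χ q).card ≤ 1) (hv : ∀ x ∈ A.χ q, 0 < v x)
    (ha : ∀ y, a = some (Act.timeout y) → y ∈ A.χ q) {x : X} (hx : x ∈ A.χ q)
    (hxa : a ≠ some (Act.timeout x)) : A.freshDelay q v a < v x := by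
  rcases a with _ | _ | y
  · exact idleDelay_lt hv hx
  · exact idleDelay_lt hv hx
  · obtain rfl : x = y := Finset.card_le_one.mp hq x hx y (ha y rfl)
    exact absurd rfl hxa

theorem freshDelay_le (hq : (A.χ q).card ≤ 1) (hv : ∀ x ∈ A.χ q, 0 < v x)
    (ha : ∀ y, a = some (Act.timeout y) → y ∈ A.χ q) {x : X} (hx : x ∈ A.χ q) :
    A.freshDelay q v a ≤ v x := by
  by_cases hxa : a = some (Act.timeout x)
  · subst hxa
    rfl
  · exact (freshDelay_lt hq hv ha hx hxa).le

end AT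

namespace TimedRun

variable {A : AT X I Q} {n : ℕ} (ρ : TimedRun A n)

def nextAct (j : Fin (n+1)) : Option (Act I X) :=
  Fin.lastCases none (fun k => some (ρ.acts k)) j

@[simp]
theorem nextAct_castSucc (k : Fin n) : ρ.nextAct k.castSucc = some (ρ.acts k) :=
  Fin.lastCases_castSucc _

@[simp]
theorem nextAct_last : ρ.nextAct (Fin.last n) = none :=
  Fin.lastCases_last

theorem mem_χ_of_nextAct_eq_timeout {j : Fin (n+1)} {x : X}
    (h : ρ.nextAct j = some (Act.timeout x)) : x ∈ A.χ (ρ.states j) := by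
  induction j using Fin.lastCases with
  | last => simp at h
  | cast k =>
    rw [nextAct_castSucc, Option.some_inj] at h
    exact A.mem_χ_of_δ_timeout (h ▸ ρ.trans k)

def ZeroOnlyAtTimeout : Prop :=
  ∀ j, ∀ x ∈ A.χ (ρ.states j), ρ.vals j x - ρ.delays j = 0 →
    ρ.nextAct j = some (Act.timeout x)

variable {ρ}

theorem delayBetween_pos (hpos : AllPos ρ) {k k' : Fin n} (h : k < k') :
    0 < delayBetween ρ k k' :=
  Finset.sum_pos (fun _ _ => hpos _) ⟨k', Finset.mem_Ioc.mpr ⟨h, le_rfl⟩⟩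

theorem not_discardedAtZeroAfter (hzero : ρ.ZeroOnlyAtTimeout) (k : Fin n) (x : X) :
    ¬ DiscardedAtZeroAfter ρ k x := by
  rintro ⟨ℓ, -, ⟨hx, hℓx, -⟩, -, hℓ⟩
  have := hzero _ x hx hℓ
  rw [nextAct_castSucc, Option.some_inj] at this
  exact hℓx this

theorem not_prec (hpos : AllPos ρ) (hzero : ρ.ZeroOnlyAtTimeout) (B : List (Fin n) × Fate)
    {B' : List (Fin n) × Fate} (hB' : IsBlock ρ B'.1 B'.2) : ¬ Prec ρ B B' := by
  rintro (⟨k, -, k', -, hlt, hzero_delay⟩ | ⟨hdisc, k', x, c, hlast, hupd, -⟩)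
  · exact (delayBetween_pos hpos hlt).ne' hzero_delay
  · have hcross := ((hB'.2.2.2.2 k' hlast).2 x c hupd).2 (not_discardedAtZeroAfter hzero k' x)
    exact Fate.noConfusion (hdisc.symm.trans hcross)

theorem not_hasRace_of_allPos (hpos : AllPos ρ) (hzero : ρ.ZeroOnlyAtTimeout) : ¬ HasRace ρ := by
  rintro ⟨B, B', hB, hB', -, hrace | hrace⟩
  · exact not_prec hpos hzero B hB' hrace
  · exact not_prec hpos hzero B' hB hrace

theorem padded_of_allPos (hpos : AllPos ρ) (hzero : ρ.ZeroOnlyAtTimeout) : Padded ρ :=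
  ⟨hpos 0, hpos _, fun x hx h => by simpa using hzero _ x hx h⟩

variable (ρ)

noncomputable def freshVals : Fin (n+1) → X → ℝ :=
  Fin.induction (fun _ => 0) fun k v y =>
    (ρ.upds k).elim (v y - A.freshDelay (ρ.states k.castSucc) v (ρ.nextAct k.castSucc))
      (fun p => if y = p.1 then ((p.2 : ℕ) : ℝ)
        else v y - A.freshDelay (ρ.states k.castSucc) v (ρ.nextAct k.castSucc))

noncomputable def freshDelays (j : Fin (n+1)) : ℝ :=
  A.freshDelay (ρ.states j) (ρ.freshVals j) (ρ.nextAct j)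

theorem freshVals_succ (k : Fin n) (y : X) :
    ρ.freshVals k.succ y = (ρ.upds k).elim (ρ.freshVals k.castSucc y - ρ.freshDelays k.castSucc)
      (fun p => if y = p.1 then ((p.2 : ℕ) : ℝ)
        else ρ.freshVals k.castSucc y - ρ.freshDelays k.castSucc) := by
  rw [freshVals, Fin.induction_succ]
  rfl

variable {ρ}

theorem freshVals_pos (hA : ∀ q, (A.χ q).card ≤ 1) (j : Fin (n+1)) :
    ∀ x ∈ A.χ (ρ.states j), 0 < ρ.freshVals j x := by
  induction j using Fin.induction with
  | zero => simp [ρ.init_state, A.init_active]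
  | succ k ih =>
    intro x hx
    rw [freshVals_succ]
    rcases A.restarted_or_mem_χ_of_δ (ρ.trans k) hx with ⟨c, hc⟩ | ⟨hx', hxa, hnot⟩
    · simp only [hc, Option.elim, ↓reduceIte]
      exact_mod_cast c.pos
    · have hlt : ρ.freshDelays k.castSucc < ρ.freshVals k.castSucc x :=
        AT.freshDelay_lt (hA _) ih (fun _ => ρ.mem_χ_of_nextAct_eq_timeout) hx'
          (by simpa using hxa)
      rcases hu : ρ.upds k with _ | ⟨z, c⟩
      · simpa using hlt
      · have hxz : x ≠ z := by rintro rfl; exact hnot c hu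
        simpa [hxz] using hlt

theorem freshDelays_pos (hA : ∀ q, (A.χ q).card ≤ 1) (j : Fin (n+1)) :
    0 < ρ.freshDelays j :=
  AT.freshDelay_pos (freshVals_pos hA j) (fun _ => ρ.mem_χ_of_nextAct_eq_timeout)

noncomputable def retime (hA : ∀ q, (A.χ q).card ≤ 1) (ρ : TimedRun A n) : TimedRun A n where
  states := ρ.states
  vals := ρ.freshVals
  delays := ρ.freshDelays
  acts := ρ.acts
  upds := ρ.upds
  init_state := ρ.init_state
  init_val _ := rfl
  delays_nonneg j := (freshDelays_pos hA j).le
  delays_le j _ hx :=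
    AT.freshDelay_le (hA _) (freshVals_pos hA j) (fun _ => ρ.mem_χ_of_nextAct_eq_timeout) hx
  trans := ρ.trans
  timeout_zero k x h := by simp [freshDelays, h, AT.freshDelay]
  val_step := ρ.freshVals_succ

theorem retime_allPos (hA : ∀ q, (A.χ q).card ≤ 1) : AllPos (ρ.retime hA) :=
  freshDelays_pos hA

theorem retime_zeroOnlyAtTimeout (hA : ∀ q, (A.χ q).card ≤ 1) :
    (ρ.retime hA).ZeroOnlyAtTimeout := by
  intro j x hx hzero
  by_contra hxa
  have := AT.freshDelay_lt (hA _) (freshVals_pos hA j)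
    (fun _ => ρ.mem_χ_of_nextAct_eq_timeout) hx hxa
  exact (sub_pos.mpr this).ne' hzero

end TimedRun

end AwT

theorem single_active_timer_race_avoiding_general {X I Q : Type} [DecidableEq X]
    (A : AwT.AT X I Q) (h : ∀ q, (A.χ q).card ≤ 1) :
    AwT.RaceAvoiding A := by
  intro n ρ _ _
  have hpos := ρ.retime_allPos h
  have hzero := ρ.retime_zeroOnlyAtTimeout h
  exact ⟨n, ρ.retime h, AwT.TimedRun.padded_of_allPos hpos hzero,
    AwT.TimedRun.not_hasRace_of_allPos hpos hzero, rfl⟩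

/-- If every state of an AT `A` has at most one active timer, then `A` is
race-avoiding. -/
theorem single_active_timer_race_avoiding {X I Q : Type} [DecidableEq X] [Fintype X]
    [Fintype I] [Fintype Q] (A : AwT.AT X I Q) (h : ∀ q, (A.χ q).card ≤ 1) :
    AwT.RaceAvoiding A :=
  single_active_timer_race_avoiding_general A h
end

section
/- Let A be an automaton with timers, and consider the modified semantics in which every delay of a timed run is required to be strictly positive. Then A is race-avoiding under this semantics: the only races that can appear in a padded timed run with all delays positive arise when a timer is discarded while its value is zero, the block graph of such a run is always acyclic, and hence every such run with races can be wiggled. -/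
/-!
With all delays positive, two actions never occur at total delay zero, so every race is a
`●`-race: the timer started by the last action of a block `B'` is first discarded, at value
zero, by an action of a block `B`. The last action of `B'` then precedes that of `B`, so the
block graph is acyclic. A `●`-race is resolved by postponing `B'` by some `ε` smaller than
every positive delay and every positive timer value; choosing the race whose starting action
comes first, no `●`-race ends inside `B'`, so the shift creates none and the number of
`●`-races strictly decreases.
-/

set_option maxHeartbeats 1000000

namespace AwT

variable {X I Q : Type} [DecidableEq X] {A : AT X I Q} {n : ℕ}

section Timers

variable {ρ : TimedRun A n}

theorem delayBetween_pos (hA : AllPos ρ) {k k' : Fin n} (h : k < k') :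
    0 < delayBetween ρ k k' :=
  Finset.sum_pos (fun _ _ => hA _) (Finset.nonempty_Ioc.mpr h)

def Persists (ρ : TimedRun A n) (x : X) (a b : Fin n) : Prop :=
  ∀ m, a < m → m < b → ρ.acts m ≠ Act.timeout x ∧ ¬ Discards ρ m x

theorem mem_χ_castSucc_of_mem_χ_succ {k : Fin n} {x : X} (hx : x ∈ A.χ (ρ.states k.succ))
    (hk : ∀ c, ρ.upds k ≠ some (x, c)) :
    x ∈ A.χ (ρ.states k.castSucc) ∧ ρ.acts k ≠ Act.timeout x ∧ ¬ Discards ρ k x := by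
  have htr := ρ.trans k
  have hmem : x ∈ A.χ (ρ.states k.castSucc) := by
    rcases hu : ρ.upds k with _ | ⟨z, c⟩
    · rw [hu] at htr
      exact A.noupdate_sub _ _ _ htr hx
    · rw [hu] at htr
      refine A.update_sub _ _ _ _ _ htr (Finset.mem_sdiff.mpr ⟨hx, ?_⟩)
      rintro hxz
      exact hk c (by rw [hu, Finset.mem_singleton.mp hxz])
  refine ⟨hmem, fun hto => ?_, fun hd => ?_⟩
  · rw [hto] at htr
    rcases hu : ρ.upds k with _ | ⟨z, c⟩
    · rw [hu] at htr
      exact A.noupdate_timeout _ _ _ htr hx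
    · rw [hu] at htr
      exact hk c (by rw [hu, A.timeout_self _ _ _ _ _ htr])
  · rcases hd.2.2 with h | ⟨c, hc⟩
    · exact h hx
    · exact hk c hc

theorem Persists.mem_χ {x : X} {a b : Fin n} {c : ℕ+} (hx : Persists ρ x a b)
    (ha : ρ.upds a = some (x, c)) {m : Fin n} (ham : a < m) (hmb : m ≤ b) :
    x ∈ A.χ (ρ.states m.castSucc) := by
  suffices ∀ j : Fin (n + 1), a.succ ≤ j → j ≤ b.castSucc → x ∈ A.χ (ρ.states j) from
    this _ (Fin.succ_le_castSucc_iff.mpr ham) (Fin.castSucc_le_castSucc_iff.mpr hmb)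
  intro j
  induction j using Fin.induction with
  | zero => exact fun h => absurd h (not_le.mpr (Fin.succ_pos a))
  | succ m ih =>
    intro h1 h2
    rcases (Fin.succ_le_succ_iff.mp h1).eq_or_lt with rfl | ham
    · exact A.update_mem _ _ _ _ _ (ha ▸ ρ.trans a)
    · have hmb : m < b := Fin.succ_le_castSucc_iff.mp h2
      obtain ⟨hto, hd⟩ := hx m ham hmb
      by_contra hnot
      exact hd ⟨ih (Fin.succ_le_castSucc_iff.mpr ham) (Fin.castSucc_le_castSucc_iff.mpr hmb.le),
        hto, Or.inl hnot⟩

theorem Persists.upds_ne {x : X} {a b : Fin n} {c : ℕ+} (hx : Persists ρ x a b)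
    (ha : ρ.upds a = some (x, c)) {m : Fin n} (ham : a < m) (hmb : m < b) (c' : ℕ+) :
    ρ.upds m ≠ some (x, c') := fun hu =>
  (hx m ham hmb).2 ⟨hx.mem_χ ha ham hmb.le, (hx m ham hmb).1, Or.inr ⟨c', hu⟩⟩

theorem exists_persists_of_mem_χ {k : Fin n} {x : X} (hx : x ∈ A.χ (ρ.states k.castSucc)) :
    ∃ a c, a < k ∧ ρ.upds a = some (x, c) ∧ Persists ρ x a k := by
  suffices ∀ j : Fin (n + 1), x ∈ A.χ (ρ.states j) → ∃ a c, a.castSucc < j ∧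
      ρ.upds a = some (x, c) ∧ ∀ m, a < m → m.castSucc < j →
        ρ.acts m ≠ Act.timeout x ∧ ¬ Discards ρ m x by
    obtain ⟨a, c, hak, hu, hx⟩ := this _ hx
    exact ⟨a, c, Fin.castSucc_lt_castSucc_iff.mp hak, hu,
      fun m ham hmk => hx m ham (Fin.castSucc_lt_castSucc_iff.mpr hmk)⟩
  intro j
  induction j using Fin.induction with
  | zero => simp [ρ.init_state, A.init_active]
  | succ k ih =>
    intro hx
    by_cases hk : ∃ c, ρ.upds k = some (x, c)
    · obtain ⟨c, hc⟩ := hk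
      exact ⟨k, c, Fin.castSucc_lt_succ, hc, fun m hkm hm =>
        absurd (Fin.castSucc_lt_succ_iff.mp hm) (not_le.mpr hkm)⟩
    · obtain ⟨hxk, htok, hdk⟩ := mem_χ_castSucc_of_mem_χ_succ hx (fun c h => hk ⟨c, h⟩)
      obtain ⟨a, c, hak, hu, hpers⟩ := ih hxk
      refine ⟨a, c, hak.trans Fin.castSucc_lt_succ, hu, fun m ham hm => ?_⟩
      rcases (Fin.castSucc_lt_succ_iff.mp hm).lt_or_eq with hmk | rfl
      · exact hpers m ham (Fin.castSucc_lt_castSucc_iff.mpr hmk)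
      · exact ⟨htok, hdk⟩

theorem mem_χ_of_acts_eq_timeout {k : Fin n} {x : X} (h : ρ.acts k = Act.timeout x) :
    x ∈ A.χ (ρ.states k.castSucc) := by
  have hdef : (A.δ (ρ.states k.castSucc) (ρ.acts k)).isSome := by rw [ρ.trans k]; rfl
  rcases (A.defined_iff _ _).mp hdef with ⟨i, hi⟩ | ⟨y, hy, hyx⟩
  · rw [h] at hi
    cases hi
  · rw [h, Act.timeout.injEq] at hyx
    rwa [hyx]

theorem exists_triggers_of_acts_eq_timeout {k : Fin n} {x : X}
    (h : ρ.acts k = Act.timeout x) : ∃ p, Triggers ρ p k := by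
  obtain ⟨a, c, hak, hu, hx⟩ := exists_persists_of_mem_χ (mem_χ_of_acts_eq_timeout h)
  exact ⟨a, hak, x, c, hu, h, hx⟩

theorem Triggers.right_unique {k a b : Fin n} (ha : Triggers ρ k a) (hb : Triggers ρ k b) :
    a = b := by
  obtain ⟨hka, x, c, hu, hto, hx⟩ := ha
  obtain ⟨hkb, y, c', hu', hto', hy⟩ := hb
  obtain ⟨rfl, -⟩ : x = y ∧ c = c' := by simpa [hu] using hu'
  rcases lt_trichotomy a b with h | h | h
  · exact absurd hto (hy a hka h).1
  · exact h
  · exact absurd hto' (hx b hkb h).1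

theorem Triggers.left_unique {p q j : Fin n} (hp : Triggers ρ p j) (hq : Triggers ρ q j) :
    p = q := by
  have not_both : ∀ p q, p < q → Triggers ρ p j → ¬ Triggers ρ q j := by
    rintro p q hpq ⟨hpj, x, c, hu, hto, hx⟩ ⟨hqj, y, c', hu', hto', -⟩
    rw [hto, Act.timeout.injEq] at hto'
    subst hto'
    exact Persists.upds_ne hx hu hpq hqj c' hu'
  rcases lt_trichotomy p q with h | h | h
  · exact absurd hq (not_both p q h hp)
  · exact h
  · exact absurd hp (not_both q p h hq)

theorem persists_of_forall_not_triggers {k ℓ : Fin n} {x : X} {c : ℕ+}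
    (hu : ρ.upds k = some (x, c)) (hk : ∀ m, ¬ Triggers ρ k m)
    (hℓ : ∀ m, k < m → m < ℓ → ¬ Discards ρ m x) : Persists ρ x k ℓ := by
  refine fun m hkm hmℓ => ⟨fun hto => ?_, hℓ m hkm hmℓ⟩
  obtain ⟨q, ⟨hkq, hqℓ, hq⟩, hmin⟩ := wellFounded_lt.has_min
    {q | k < q ∧ q < ℓ ∧ ρ.acts q = Act.timeout x} ⟨m, hkm, hmℓ, hto⟩
  exact hk q ⟨hkq, x, c, hu, hq, fun p hkp hpq =>
    ⟨fun hp => hmin p ⟨hkp, hpq.trans hqℓ, hp⟩ hpq, hℓ p hkp (hpq.trans hqℓ)⟩⟩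

theorem eq_of_first_discards {k ℓ₁ ℓ₂ : Fin n} {x : X} (h₁ : k < ℓ₁) (h₂ : k < ℓ₂)
    (d₁ : Discards ρ ℓ₁ x) (d₂ : Discards ρ ℓ₂ x)
    (f₁ : ∀ m, k < m → m < ℓ₁ → ¬ Discards ρ m x)
    (f₂ : ∀ m, k < m → m < ℓ₂ → ¬ Discards ρ m x) : ℓ₁ = ℓ₂ := by
  rcases lt_trichotomy ℓ₁ ℓ₂ with h | h | h
  · exact absurd d₁ (f₂ ℓ₁ h₁ h)
  · exact h
  · exact absurd d₂ (f₁ ℓ₂ h₂ h)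

end Timers

section ZeroDiscards

variable {ρ : TimedRun A n}

/-- The timer started by `a` is first discarded by `b`, at value zero: the races of fate `●`,
the only ones left when all delays are positive. -/
def ZeroDiscard (ρ : TimedRun A n) (a b : Fin n) : Prop :=
  a < b ∧ ∃ x c, ρ.upds a = some (x, c) ∧ Persists ρ x a b ∧ Discards ρ b x ∧
    ρ.vals b.castSucc x - ρ.delays b.castSucc = 0

open Classical in
noncomputable def zeroDiscards (ρ : TimedRun A n) : Finset (Fin n × Fin n) :=
  Finset.univ.filter fun p => ZeroDiscard ρ p.1 p.2

theorem mem_zeroDiscards {a b : Fin n} : (a, b) ∈ zeroDiscards ρ ↔ ZeroDiscard ρ a b := by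
  simp [zeroDiscards]

theorem ZeroDiscard.not_triggers {a b : Fin n} (h : ZeroDiscard ρ a b) (m : Fin n) :
    ¬ Triggers ρ a m := by
  obtain ⟨hab, x, c, hu, hx, hd, -⟩ := h
  rintro ⟨ham, y, c', hu', hto, hy⟩
  obtain ⟨rfl, -⟩ : x = y ∧ c = c' := by simpa [hu] using hu'
  rcases lt_trichotomy m b with h | rfl | h
  · exact (hx m ham h).1 hto
  · exact hd.2.1 hto
  · exact (hy b hab h).2 hd

theorem Prec.exists_zeroDiscard (hA : AllPos ρ) {B B' : List (Fin n) × Fate}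
    (hB' : IsBlock ρ B'.1 B'.2) (h : Prec ρ B B') :
    ∃ k' ℓ, B'.1.getLast? = some k' ∧ ℓ ∈ B.1 ∧ ZeroDiscard ρ k' ℓ := by
  rcases h with ⟨k, -, k', -, hkk', h0⟩ | ⟨hγ, k', x, c, hlast, hu, ℓ, hℓ, hk'ℓ, hd, hfirst⟩
  · exact absurd h0 (delayBetween_pos hA hkk').ne'
  obtain ⟨ℓ₀, hk'ℓ₀, hd₀, hfirst₀, hzero⟩ : DiscardedAtZeroAfter ρ k' x := by
    by_contra hnot
    have hcross := ((hB'.2.2.2.2 k' hlast).2 x c hu).2 hnot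
    rw [hγ] at hcross
    cases hcross
  obtain rfl := eq_of_first_discards hk'ℓ hk'ℓ₀ hd hd₀ hfirst hfirst₀
  exact ⟨k', ℓ, hlast, hℓ, hk'ℓ, x, c, hu,
    persists_of_forall_not_triggers hu (fun m => hB'.2.2.2.1 k' m hlast) hfirst, hd, hzero⟩

theorem HasRace.exists_zeroDiscard (hA : AllPos ρ) (h : HasRace ρ) :
    ∃ a b, ZeroDiscard ρ a b := by
  obtain ⟨B, B', hB, hB', -, hp | hp⟩ := h
  · obtain ⟨a, b, -, -, hab⟩ := hp.exists_zeroDiscard hA hB'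
    exact ⟨a, b, hab⟩
  · obtain ⟨a, b, -, -, hab⟩ := hp.exists_zeroDiscard hA hB
    exact ⟨a, b, hab⟩

theorem IsBlock.le_getLast {ks : List (Fin n)} {γ : Fate} (hB : IsBlock ρ ks γ) {ℓ : Fin n}
    (hℓ : ℓ ∈ ks) : ℓ ≤ ks.getLast hB.1 :=
  hB.2.1.backwards_induction (· ≤ ks.getLast hB.1) ks (fun _ _ h h' => h.1.le.trans h')
    (fun _ => le_rfl) ℓ hℓ

theorem Prec.getLast_lt (hA : AllPos ρ) {B B' : List (Fin n) × Fate} (hB : IsBlock ρ B.1 B.2)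
    (hB' : IsBlock ρ B'.1 B'.2) (h : Prec ρ B B') : B'.1.getLast hB'.1 < B.1.getLast hB.1 := by
  obtain ⟨k', ℓ, hlast, hℓ, hk'ℓ, -⟩ := h.exists_zeroDiscard hA hB'
  rw [List.getLast?_eq_some_getLast hB'.1, Option.some_inj] at hlast
  exact hlast ▸ hk'ℓ.trans_le (hB.le_getLast hℓ)

theorem not_hasCycle (hA : AllPos ρ) : ¬ HasCycle ρ := by
  rintro ⟨m, f, hm, hf, hcyc, hprec⟩
  let g : Fin (m + 1) → Fin n := fun j => (f j).1.getLast (hf j).1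
  have hg : StrictAnti g :=
    Fin.strictAnti_iff_succ_lt.mpr fun j => (hprec j).getLast_lt hA (hf _) (hf _)
  have hlast : g (Fin.last m) = g 0 := by simp only [g, hcyc]
  exact (hg (Fin.lt_def.mpr hm)).ne hlast

end ZeroDiscards

section TriggerChain

variable (ρ : TimedRun A n)

open Classical in
noncomputable def triggerChain (k : Fin n) : List (Fin n) :=
  if h : ∃ p, Triggers ρ p k then triggerChain h.choose ++ [k] else [k]
termination_by (k : ℕ)
decreasing_by exact h.choose_spec.1

theorem getLast?_triggerChain (k : Fin n) : (triggerChain ρ k).getLast? = some k := by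
  rw [triggerChain]
  split_ifs <;> simp

theorem triggerChain_ne_nil (k : Fin n) : triggerChain ρ k ≠ [] := by
  rw [← List.getLast?_isSome, getLast?_triggerChain]
  rfl

theorem isChain_triggerChain (k : Fin n) : (triggerChain ρ k).IsChain (Triggers ρ) := by
  rw [triggerChain]
  split_ifs with h
  · refine (isChain_triggerChain h.choose).append (List.isChain_singleton k) ?_
    simpa [getLast?_triggerChain] using h.choose_spec
  · exact List.isChain_singleton k
termination_by (k : ℕ)
decreasing_by exact h.choose_spec.1

theorem not_triggers_head_triggerChain (k : Fin n) :
    ∀ h ∈ (triggerChain ρ k).head?, ∀ p, ¬ Triggers ρ p h := by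
  rw [triggerChain]
  split_ifs with h
  · intro h₀ h₀mem
    rw [List.head?_append_of_ne_nil _ (triggerChain_ne_nil ρ _)] at h₀mem
    exact not_triggers_head_triggerChain h.choose h₀ h₀mem
  · simpa using fun p hp => h ⟨p, hp⟩
termination_by (k : ℕ)
decreasing_by exact h.choose_spec.1

theorem mem_triggerChain_iff {a k : Fin n} :
    a ∈ triggerChain ρ k ↔ Relation.ReflTransGen (Triggers ρ) a k := by
  constructor
  · rw [triggerChain]
    split_ifs with h
    · rw [List.mem_append, List.mem_singleton]
      rintro (ha | rfl)
      · exact ((mem_triggerChain_iff).mp ha).tail h.choose_spec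
      · exact .refl
    · rw [List.mem_singleton]
      rintro rfl
      exact .refl
  · intro hak
    induction hak with
    | refl => exact List.mem_of_getLast? (getLast?_triggerChain ρ a)
    | @tail b k _ hbk ih =>
      have h : ∃ p, Triggers ρ p k := ⟨b, hbk⟩
      rw [triggerChain, dif_pos h, ← hbk.left_unique h.choose_spec]
      exact List.mem_append_left _ ih
termination_by (k : ℕ)
decreasing_by exact h.choose_spec.1

theorem le_of_mem_triggerChain {a k : Fin n} (h : a ∈ triggerChain ρ k) : a ≤ k := by
  replace h := (mem_triggerChain_iff ρ).mp h
  induction h with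
  | refl => exact le_rfl
  | tail _ hbc ih => exact ih.trans hbc.1.le

theorem mem_triggerChain_iff_of_triggers {k a b : Fin n} (hk : ∀ m, ¬ Triggers ρ k m)
    (hab : Triggers ρ a b) : a ∈ triggerChain ρ k ↔ b ∈ triggerChain ρ k := by
  rw [mem_triggerChain_iff, mem_triggerChain_iff]
  refine ⟨fun hak => ?_, fun hbk => hbk.head hab⟩
  rcases hak.cases_head with rfl | ⟨b', hab', hb'k⟩
  · exact absurd hab (hk b)
  · exact hab.right_unique hab' ▸ hb'k

theorem isBlock_triggerChain {k ℓ : Fin n} (h : ZeroDiscard ρ k ℓ) :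
    IsBlock ρ (triggerChain ρ k) Fate.disc0 := by
  have hnt := h.not_triggers
  obtain ⟨hkℓ, x, c, hu, hx, hd, hzero⟩ := h
  refine ⟨triggerChain_ne_nil ρ k, isChain_triggerChain ρ k, fun h₀ hh₀ => ?_, ?_, ?_⟩
  · rcases hact : ρ.acts h₀ with i | y
    · exact ⟨i, rfl⟩
    · obtain ⟨p, hp⟩ := exists_triggers_of_acts_eq_timeout hact
      exact absurd hp (not_triggers_head_triggerChain ρ k h₀ hh₀ p)
  · intro k' m hk'
    rw [getLast?_triggerChain, Option.some_inj] at hk'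
    exact hk' ▸ hnt m
  · intro k' hk'
    rw [getLast?_triggerChain, Option.some_inj] at hk'
    subst hk'
    refine ⟨fun hnone => by simp [hu] at hnone, fun y c' hu' => ?_⟩
    obtain ⟨rfl, -⟩ : x = y ∧ c = c' := by simpa [hu] using hu'
    exact ⟨fun _ => rfl, fun hnot => absurd ⟨ℓ, hkℓ, hd, fun m h1 h2 => (hx m h1 h2).2, hzero⟩ hnot⟩

end TriggerChain

section Retime

variable (ρ : TimedRun A n) (s : Fin n → ℝ)

def nextShift (j : Fin (n + 1)) : ℝ := Fin.snoc (α := fun _ => ℝ) s 0 j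

def prevShift (j : Fin (n + 1)) : ℝ := Fin.cons (α := fun _ => ℝ) 0 s j

@[simp] theorem nextShift_castSucc (k : Fin n) : nextShift s k.castSucc = s k := by
  simp [nextShift]

@[simp] theorem nextShift_last : nextShift s (Fin.last n) = 0 := by simp [nextShift]

@[simp] theorem prevShift_zero : prevShift s 0 = 0 := rfl

@[simp] theorem prevShift_succ (k : Fin n) : prevShift s k.succ = s k := by simp [prevShift]

/-- Postponing action `k` by `s k` lengthens the delay before it and shortens the one after it. -/
def retimedDelay (j : Fin (n + 1)) : ℝ := ρ.delays j + nextShift s j - prevShift s j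

/-- The shift of the last action before configuration `j` that started `y` (`0` if none did). -/
def lastShift (y : X) : Fin (n + 1) → ℝ :=
  Fin.induction 0 fun k r => (ρ.upds k).elim r fun p => if y = p.1 then s k else r

@[simp] theorem lastShift_zero (y : X) : lastShift ρ s y 0 = 0 := rfl

theorem lastShift_succ (y : X) (k : Fin n) :
    lastShift ρ s y k.succ = (ρ.upds k).elim (lastShift ρ s y k.castSucc)
      fun p => if y = p.1 then s k else lastShift ρ s y k.castSucc :=
  Fin.induction_succ _ _ k

/-- A timer is started later by the shift of its starting action and read later by the shift
of the latest action. -/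
def retimedVals (j : Fin (n + 1)) (y : X) : ℝ := ρ.vals j y + lastShift ρ s y j - prevShift s j

theorem retimedVals_sub_retimedDelay (j : Fin (n + 1)) (y : X) :
    retimedVals ρ s j y - retimedDelay ρ s j =
      ρ.vals j y - ρ.delays j + lastShift ρ s y j - nextShift s j := by
  simp only [retimedVals, retimedDelay]
  ring

theorem retimedVals_succ (k : Fin n) (y : X) :
    retimedVals ρ s k.succ y = (ρ.upds k).elim
      (retimedVals ρ s k.castSucc y - retimedDelay ρ s k.castSucc)
      fun p => if y = p.1 then ((p.2 : ℕ) : ℝ)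
        else retimedVals ρ s k.castSucc y - retimedDelay ρ s k.castSucc := by
  rw [retimedVals_sub_retimedDelay, nextShift_castSucc]
  simp only [retimedVals, lastShift_succ, ρ.val_step k y, prevShift_succ]
  rcases ρ.upds k with _ | ⟨z, c⟩
  · simp only [Option.elim_none]
  · by_cases hy : y = z
    · simp [hy]
    · simp only [Option.elim_some, hy, if_false]

def TimedRun.retime_s12 (hd : ∀ j, 0 ≤ retimedDelay ρ s j)
    (hle : ∀ j, ∀ x ∈ A.χ (ρ.states j), 0 ≤ retimedVals ρ s j x - retimedDelay ρ s j)
    (hto : ∀ k x, ρ.acts k = Act.timeout x →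
      retimedVals ρ s k.castSucc x - retimedDelay ρ s k.castSucc = 0) : TimedRun A n where
  states := ρ.states
  vals := retimedVals ρ s
  delays := retimedDelay ρ s
  acts := ρ.acts
  upds := ρ.upds
  init_state := ρ.init_state
  init_val x := by simp [retimedVals, ρ.init_val]
  delays_nonneg := hd
  delays_le j x hx := sub_nonneg.mp (hle j x hx)
  trans := ρ.trans
  timeout_zero := hto
  val_step := retimedVals_succ ρ s

variable {ρ s}

theorem lastShift_nonneg (hs : ∀ k, 0 ≤ s k) (y : X) (j : Fin (n + 1)) :
    0 ≤ lastShift ρ s y j := by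
  induction j using Fin.induction with
  | zero => rfl
  | succ k ih =>
    rw [lastShift_succ]
    rcases ρ.upds k with _ | ⟨z, c⟩
    · exact ih
    · dsimp only [Option.elim_some]
      split_ifs
      exacts [hs k, ih]

theorem lastShift_castSucc_of_persists {x : X} {a k : Fin n} {c : ℕ+}
    (hu : ρ.upds a = some (x, c)) (hak : a < k) (hx : Persists ρ x a k) :
    lastShift ρ s x k.castSucc = s a := by
  suffices ∀ j : Fin (n + 1), a.castSucc < j → j ≤ k.castSucc → lastShift ρ s x j = s a from
    this _ (Fin.castSucc_lt_castSucc_iff.mpr hak) le_rfl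
  intro j
  induction j using Fin.induction with
  | zero => exact fun h => absurd h (Fin.not_lt_zero _)
  | succ m ih =>
    intro ham hmk
    rw [lastShift_succ]
    rcases (Fin.castSucc_lt_succ_iff.mp ham).eq_or_lt with rfl | ham
    · simp [hu]
    · have hmk : m < k := Fin.succ_le_castSucc_iff.mp hmk
      have hprev := ih (Fin.castSucc_lt_castSucc_iff.mpr ham) (Fin.castSucc_le_castSucc_iff.mpr hmk.le)
      rcases hum : ρ.upds m with _ | ⟨z, c'⟩
      · exact hprev
      · have hzx : x ≠ z := by
          rintro rfl
          exact Persists.upds_ne hx hu ham hmk c' hum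
        simpa [hzx] using hprev

theorem retimedSlack_of_persists {x : X} {a b : Fin n} {c : ℕ+}
    (hu : ρ.upds a = some (x, c)) (hab : a < b) (hx : Persists ρ x a b) :
    retimedVals ρ s b.castSucc x - retimedDelay ρ s b.castSucc =
      ρ.vals b.castSucc x - ρ.delays b.castSucc + s a - s b := by
  rw [retimedVals_sub_retimedDelay, lastShift_castSucc_of_persists hu hab hx, nextShift_castSucc]

theorem retimedSlack_eq_zero_of_timeout (htrig : ∀ a b, Triggers ρ a b → s a = s b)
    {k : Fin n} {x : X} (h : ρ.acts k = Act.timeout x) :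
    retimedVals ρ s k.castSucc x - retimedDelay ρ s k.castSucc = 0 := by
  obtain ⟨a, c, hak, hu, hx⟩ := exists_persists_of_mem_χ (mem_χ_of_acts_eq_timeout h)
  rw [retimedSlack_of_persists hu hak hx, ρ.timeout_zero k x h, htrig a k ⟨hak, x, c, hu, h, hx⟩]
  ring

theorem exists_eq_castSucc_of_slack_eq_zero (hP : Padded ρ) (hA : AllPos ρ) {j : Fin (n + 1)}
    {x : X} (hx : x ∈ A.χ (ρ.states j)) (h0 : ρ.vals j x - ρ.delays j = 0) :
    ∃ k, j = k.castSucc ∧ (ρ.acts k = Act.timeout x ∨ Discards ρ k x) := by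
  rcases j.eq_castSucc_or_eq_last with ⟨k, rfl⟩ | rfl
  · refine ⟨k, rfl, ?_⟩
    -- otherwise the positive delay after action `k` would drive `x` below zero
    by_contra! hk
    have hupd : ∀ c, ρ.upds k ≠ some (x, c) := fun c hc => hk.2 ⟨hx, hk.1, Or.inr ⟨c, hc⟩⟩
    have hxk : x ∈ A.χ (ρ.states k.succ) := not_not.mp fun hn => hk.2 ⟨hx, hk.1, Or.inl hn⟩
    have hval : ρ.vals k.succ x = 0 := by
      rw [ρ.val_step k x, ← h0]
      rcases hu : ρ.upds k with _ | ⟨z, c⟩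
      · rfl
      · have hxz : x ≠ z := by
          rintro rfl
          exact hupd c hu
        simp [hxz]
    have := ρ.delays_le k.succ x hxk
    linarith [hA k.succ]
  · exact absurd h0 (hP.2.2 x hx)

theorem retimedSlack_nonneg (hP : Padded ρ) (hA : AllPos ρ) (hs : ∀ k, 0 ≤ s k)
    (hslack : ∀ j, ∀ x ∈ A.χ (ρ.states j), 0 < ρ.vals j x - ρ.delays j →
      ∀ k, s k < ρ.vals j x - ρ.delays j)
    (htrig : ∀ a b, Triggers ρ a b → s a = s b) (hzero : ∀ a b, ZeroDiscard ρ a b → s b = 0)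
    {j : Fin (n + 1)} {x : X} (hx : x ∈ A.χ (ρ.states j)) :
    0 ≤ retimedVals ρ s j x - retimedDelay ρ s j := by
  rcases (sub_nonneg.mpr (ρ.delays_le j x hx)).eq_or_lt with h0 | hpos
  · obtain ⟨k, rfl, hto | hd⟩ := exists_eq_castSucc_of_slack_eq_zero hP hA hx h0.symm
    · exact (retimedSlack_eq_zero_of_timeout htrig hto).ge
    · obtain ⟨a, c, hak, hu, hpers⟩ := exists_persists_of_mem_χ hx
      rw [retimedSlack_of_persists hu hak hpers, ← h0,
        hzero a k ⟨hak, x, c, hu, hpers, hd, h0.symm⟩]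
      linarith [hs a]
  · have hnext : nextShift s j < ρ.vals j x - ρ.delays j := by
      rcases j.eq_castSucc_or_eq_last with ⟨k, rfl⟩ | rfl
      · simpa using hslack _ x hx hpos k
      · simpa using hpos
    rw [retimedVals_sub_retimedDelay]
    linarith [lastShift_nonneg (ρ := ρ) hs x j]

theorem retimedDelay_pos (hA : AllPos ρ) (hs : ∀ k, 0 ≤ s k) (hsd : ∀ k, s k < ρ.delays k.succ)
    (j : Fin (n + 1)) : 0 < retimedDelay ρ s j := by
  have hnext : 0 ≤ nextShift s j := by
    rcases j.eq_castSucc_or_eq_last with ⟨k, rfl⟩ | rfl <;> simp [hs]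
  have hprev : prevShift s j < ρ.delays j := by
    rcases j.eq_zero_or_eq_succ with rfl | ⟨k, rfl⟩
    · simpa using hA 0
    · simpa using hsd k
  simp only [retimedDelay]
  linarith

end Retime

open Filter Topology in
theorem exists_pos_lt_delays_slacks {ρ : TimedRun A n} (hA : AllPos ρ) :
    ∃ ε : ℝ, 0 < ε ∧ (∀ j, ε < ρ.delays j) ∧ ∀ j, ∀ x ∈ A.χ (ρ.states j),
      0 < ρ.vals j x - ρ.delays j → ε < ρ.vals j x - ρ.delays j := by
  have hlt : ∀ r : ℝ, 0 < r → ∀ᶠ ε in 𝓝[>] (0 : ℝ), ε < r := fun r hr =>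
    eventually_nhdsWithin_of_eventually_nhds (eventually_lt_nhds hr)
  have hslack : ∀ j, ∀ x ∈ A.χ (ρ.states j), ∀ᶠ ε in 𝓝[>] (0 : ℝ),
      0 < ρ.vals j x - ρ.delays j → ε < ρ.vals j x - ρ.delays j := fun j x _ => by
    by_cases h : 0 < ρ.vals j x - ρ.delays j
    · exact (hlt _ h).mono fun _ hε _ => hε
    · exact .of_forall fun _ h' => absurd h' h
  exact (eventually_mem_nhdsWithin.and ((eventually_all.mpr fun j => hlt _ (hA j)).and
    (eventually_all.mpr fun j => (eventually_all_finset _).mpr (hslack j)))).exists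

section BlockShift

variable {ρ : TimedRun A n} {S : Set (Fin n)} {ε : ℝ}

open Classical in
theorem wiggledDelay_eq_retimedDelay (j : Fin (n + 1)) :
    wiggledDelay ρ S ε j = retimedDelay ρ (S.indicator fun _ => ε) j := by
  have hnext : nextShift (S.indicator fun _ => ε) j =
      if ∃ k : Fin n, k.castSucc = j ∧ k ∈ S then ε else 0 := by
    rcases j.eq_castSucc_or_eq_last with ⟨k, rfl⟩ | rfl
    · simp [Set.indicator_apply]
    · simp
  have hprev : prevShift (S.indicator fun _ => ε) j =
      if ∃ k : Fin n, k.succ = j ∧ k ∈ S then ε else 0 := by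
    rcases j.eq_zero_or_eq_succ with rfl | ⟨k, rfl⟩
    · simp
    · simp [Set.indicator_apply]
  rw [wiggledDelay, retimedDelay, hnext, hprev]
  simp only [← and_assoc, exists_and_right, ← not_exists]
  split_ifs <;> simp_all

variable (hε : 0 < ε)
  (hεs : ∀ j, ∀ x ∈ A.χ (ρ.states j), 0 < ρ.vals j x - ρ.delays j → ε < ρ.vals j x - ρ.delays j)
  (hS_zero : ∀ a b, ZeroDiscard ρ a b → b ∉ S)
include hε hεs hS_zero

theorem ZeroDiscard.of_retime_indicator {hd hle hto} {a b : Fin n}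
    (h : ZeroDiscard (ρ.retime_s12 (S.indicator fun _ => ε) hd hle hto) a b) :
    a ∉ S ∧ b ∉ S ∧ ZeroDiscard ρ a b := by
  obtain ⟨hab, x, c, hu, hx, hdisc, h0⟩ := h
  have hslack : ρ.vals b.castSucc x - ρ.delays b.castSucc + S.indicator (fun _ => ε) a -
      S.indicator (fun _ => ε) b = 0 := (retimedSlack_of_persists (ρ := ρ) hu hab hx).symm.trans h0
  have hnn : 0 ≤ ρ.vals b.castSucc x - ρ.delays b.castSucc :=
    sub_nonneg.mpr (ρ.delays_le _ x hdisc.1)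
  by_cases hb : b ∈ S
  · rw [Set.indicator_of_mem hb] at hslack
    by_cases ha : a ∈ S
    · rw [Set.indicator_of_mem ha] at hslack
      exact absurd hb (hS_zero a b ⟨hab, x, c, hu, hx, hdisc, by linarith⟩)
    · rw [Set.indicator_of_notMem ha] at hslack
      linarith [hεs _ x hdisc.1 (by linarith)]
  · rw [Set.indicator_of_notMem hb] at hslack
    have ha : a ∉ S := fun ha => by
      rw [Set.indicator_of_mem ha] at hslack
      linarith
    rw [Set.indicator_of_notMem ha] at hslack
    exact ⟨ha, hb, hab, x, c, hu, hx, hdisc, by linarith⟩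

theorem exists_blockShift (hP : Padded ρ) (hA : AllPos ρ) (hεd : ∀ j, ε < ρ.delays j)
    (hS_trig : ∀ a b, Triggers ρ a b → (a ∈ S ↔ b ∈ S)) :
    ∃ ρ' : TimedRun A n, WiggleSpec ρ ρ' S ε ∧ Padded ρ' ∧ AllPos ρ' ∧
      ∀ a b, ZeroDiscard ρ' a b → a ∉ S ∧ b ∉ S ∧ ZeroDiscard ρ a b := by
  set s := S.indicator fun _ => ε
  have hs : ∀ k, 0 ≤ s k := Set.indicator_nonneg fun _ _ => hε.le
  have hsε : ∀ k, s k ≤ ε := Set.indicator_le_self' fun _ _ => hε.le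
  have hpos : ∀ j, 0 < retimedDelay ρ s j :=
    retimedDelay_pos hA hs fun k => (hsε k).trans_lt (hεd k.succ)
  have htrig : ∀ a b, Triggers ρ a b → s a = s b := fun a b h => by
    dsimp only [s]
    by_cases ha : a ∈ S
    · rw [Set.indicator_of_mem ha, Set.indicator_of_mem ((hS_trig a b h).mp ha)]
    · rw [Set.indicator_of_notMem ha, Set.indicator_of_notMem (mt (hS_trig a b h).mpr ha)]
  have hzero : ∀ a b, ZeroDiscard ρ a b → s b = 0 := fun a b h =>
    Set.indicator_of_notMem (hS_zero a b h) _
  let ρ' := ρ.retime_s12 s (fun j => (hpos j).le)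
    (fun j x hx => retimedSlack_nonneg hP hA hs
      (fun j x hx h k => (hsε k).trans_lt (hεs j x hx h)) htrig hzero hx)
    (fun k x h => retimedSlack_eq_zero_of_timeout htrig h)
  refine ⟨ρ', ⟨rfl, rfl, rfl, fun j => (wiggledDelay_eq_retimedDelay j).symm⟩,
    ⟨hpos 0, hpos _, fun x hx => ?_⟩, hpos, fun a b h => h.of_retime_indicator hε hεs hS_zero⟩
  have hslack : 0 < ρ.vals (Fin.last n) x - ρ.delays (Fin.last n) :=
    (sub_nonneg.mpr (ρ.delays_le _ x hx)).lt_of_ne (hP.2.2 x hx).symm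
  refine ne_of_gt ?_
  change 0 < retimedVals ρ s (Fin.last n) x - retimedDelay ρ s (Fin.last n)
  rw [retimedVals_sub_retimedDelay, nextShift_last]
  linarith [lastShift_nonneg (ρ := ρ) hs x (Fin.last n)]

end BlockShift

/-- Postpone the block ending at the earliest-starting `●`-race: by minimality no such race
ends inside the block, so the shift creates no race and resolves that one. -/
theorem exists_wiggleStep {ρ : TimedRun A n} (hP : Padded ρ) (hA : AllPos ρ) (h : (zeroDiscards ρ).Nonempty) :
    ∃ ρ', WiggleStep ρ ρ' ∧ Padded ρ' ∧ AllPos ρ' ∧ untime ρ' = untime ρ ∧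
      (zeroDiscards ρ').card < (zeroDiscards ρ).card := by
  obtain ⟨⟨k, ℓ⟩, hkℓ, hmin⟩ := (zeroDiscards ρ).exists_min_image Prod.fst h
  rw [mem_zeroDiscards] at hkℓ
  set ks := triggerChain ρ k
  have hk : k ∈ ks := (mem_triggerChain_iff ρ).mpr .refl
  have hS_zero : ∀ a b, ZeroDiscard ρ a b → b ∉ ks := fun a b hab hb =>
    (hmin (a, b) (mem_zeroDiscards.mpr hab)).not_gt
      (hab.1.trans_le (le_of_mem_triggerChain ρ hb))
  obtain ⟨ε, hε, hεd, hεs⟩ := exists_pos_lt_delays_slacks hA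
  obtain ⟨ρ', hspec, hP', hA', hzero⟩ :=
    exists_blockShift (S := {m | m ∈ ks}) hε hεs hS_zero hP hA hεd
      fun a b => mem_triggerChain_iff_of_triggers ρ hkℓ.not_triggers
  refine ⟨ρ', ⟨ks, .disc0, ε, hε.ne', isBlock_triggerChain ρ hkℓ, hspec, hP', ?_⟩, hP', hA',
    by simp [untime, hspec.1, hspec.2.1], Finset.card_lt_card ⟨fun p hp => ?_, fun hsub => ?_⟩⟩
  · rintro γ ks₂ γ₂ hB hB₂ - (hp | hp)
    · obtain ⟨k', ℓ', -, hℓ', hz⟩ := hp.exists_zeroDiscard hA' hB₂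
      exact (hzero k' ℓ' hz).2.1 hℓ'
    · obtain ⟨k', ℓ', hlast, -, hz⟩ := hp.exists_zeroDiscard hA' hB
      exact (hzero k' ℓ' hz).1 (List.mem_of_getLast? hlast)
  · exact mem_zeroDiscards.mpr (hzero p.1 p.2 (mem_zeroDiscards.mp hp)).2.2
  · exact (hzero k ℓ (mem_zeroDiscards.mp (hsub (mem_zeroDiscards.mpr hkℓ)))).1 hk

theorem exists_wiggleSteps_not_hasRace {ρ : TimedRun A n} (hP : Padded ρ) (hA : AllPos ρ) :
    ∃ ρ', Relation.ReflTransGen WiggleStep ρ ρ' ∧ Padded ρ' ∧ AllPos ρ' ∧ ¬ HasRace ρ' ∧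
      untime ρ' = untime ρ := by
  rcases (zeroDiscards ρ).eq_empty_or_nonempty with h0 | hne
  · refine ⟨ρ, .refl, hP, hA, fun hr => ?_, rfl⟩
    obtain ⟨a, b, hab⟩ := hr.exists_zeroDiscard hA
    simpa [h0] using mem_zeroDiscards.mpr hab
  · obtain ⟨ρ₁, hstep, hP₁, hA₁, hut₁, hlt⟩ := exists_wiggleStep hP hA hne
    obtain ⟨ρ', hsteps, hP', hA', hnr, hut'⟩ := exists_wiggleSteps_not_hasRace hP₁ hA₁
    exact ⟨ρ', .head hstep hsteps, hP', hA', hnr, hut'.trans hut₁⟩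
termination_by (zeroDiscards ρ).card

end AwT

theorem positive_delays_race_avoiding_general {X I Q : Type} [DecidableEq X] (A : AwT.AT X I Q) :
    (∀ (n : ℕ) (ρ : AwT.TimedRun A n), AwT.Padded ρ → AwT.AllPos ρ →
      ∀ k k' : Fin n, k < k' → AwT.delayBetween ρ k k' ≠ 0) ∧
    (∀ (n : ℕ) (ρ : AwT.TimedRun A n), AwT.Padded ρ → AwT.AllPos ρ → ¬ AwT.HasCycle ρ) ∧
    (∀ (n : ℕ) (ρ : AwT.TimedRun A n), AwT.Padded ρ → AwT.AllPos ρ → AwT.HasRace ρ →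
      AwT.Wigglable ρ) ∧
    (∀ (n : ℕ) (ρ : AwT.TimedRun A n), AwT.Padded ρ → AwT.AllPos ρ → AwT.HasRace ρ →
      ∃ (n' : ℕ) (ρ' : AwT.TimedRun A n'), AwT.Padded ρ' ∧ AwT.AllPos ρ' ∧ ¬ AwT.HasRace ρ' ∧
        AwT.untime ρ' = AwT.untime ρ) := by
  refine ⟨fun _ _ _ hA _ _ h => (AwT.delayBetween_pos hA h).ne',
    fun _ _ _ hA => AwT.not_hasCycle hA, fun _ _ hP hA _ => ?_, fun n _ hP hA _ => ?_⟩
  · obtain ⟨ρ', hsteps, hP', -, hnr, hut⟩ := AwT.exists_wiggleSteps_not_hasRace hP hA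
    exact ⟨ρ', hsteps, hP', hnr, hut⟩
  · obtain ⟨ρ', -, hP', hA', hnr, hut⟩ := AwT.exists_wiggleSteps_not_hasRace hP hA
    exact ⟨n, ρ', hP', hA', hnr, hut⟩

/-- Under the modified semantics in which every delay of a timed run is
required to be strictly positive, every AT `A` is race-avoiding: (1) no two distinct actions
occur at total delay zero, so the only possible races arise from a timer discarded at value
zero; (2) the block graph of every such run is acyclic; (3) hence every such run with races
can be wiggled; and (4) `A` is race-avoiding with respect to this semantics. -/
theorem positive_delays_race_avoiding {X I Q : Type} [DecidableEq X] [Fintype X] [Fintype I]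
    [Fintype Q] (A : AwT.AT X I Q) :
    (∀ (n : ℕ) (ρ : AwT.TimedRun A n), AwT.Padded ρ → AwT.AllPos ρ →
      ∀ k k' : Fin n, k < k' → AwT.delayBetween ρ k k' ≠ 0) ∧
    (∀ (n : ℕ) (ρ : AwT.TimedRun A n), AwT.Padded ρ → AwT.AllPos ρ → ¬ AwT.HasCycle ρ) ∧
    (∀ (n : ℕ) (ρ : AwT.TimedRun A n), AwT.Padded ρ → AwT.AllPos ρ → AwT.HasRace ρ →
      AwT.Wigglable ρ) ∧
    (∀ (n : ℕ) (ρ : AwT.TimedRun A n), AwT.Padded ρ → AwT.AllPos ρ → AwT.HasRace ρ →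
      ∃ (n' : ℕ) (ρ' : AwT.TimedRun A n'), AwT.Padded ρ' ∧ AwT.AllPos ρ' ∧ ¬ AwT.HasRace ρ' ∧
        AwT.untime ρ' = AwT.untime ρ) :=
  positive_delays_race_avoiding_general A
end
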